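/- Let Q ⪰ 0 be a symmetric matrix with largest eigenvalue λ̄, and v ∈ ℝⁿ. Then for every β ∈ [0,1]: (1−β²)λ̄ + 2β‖v‖ ≤ inf_{λ > λ̄} (λ + v^⊤(λI_n − Q)^{-1}v) ≤ λ̄ + 2‖v‖. -/

import Mathlib

/-!
Diagonalising `Q = U diag(μ) Uᵀ` and putting `w = Uᵀ v` gives
`vᵀ(λI - Q)⁻¹v = ∑ᵢ wᵢ² / (λ - μᵢ)` with `∑ᵢ wᵢ² = ‖v‖²`. Since `0 ≤ μᵢ ≤ λ̄ < λ`, this lies between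
`‖v‖²/λ` and `‖v‖²/(λ - λ̄)`. The lower bound follows from
`λ + ‖v‖²/λ = 2β‖v‖ + (1 - β²)λ + (βλ - ‖v‖)²/λ`; the upper bound
from the choice `λ = λ̄ + ‖v‖ + ε`.
-/

open Matrix

lemma le_add_sq_div {β m l : ℝ} (hβ : β ∈ Set.Icc (0 : ℝ) 1) (hm : 0 ≤ m) (hml : m < l) (s : ℝ) :
    (1 - β ^ 2) * m + 2 * β * s ≤ l + s ^ 2 / l := by
  have hl : 0 < l := hm.trans_lt hml
  have hβ2 : β ^ 2 ≤ 1 := pow_le_one₀ hβ.1 hβ.2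
  have hsq : l + s ^ 2 / l - 2 * β * s - (1 - β ^ 2) * l = (β * l - s) ^ 2 / l := by
    field_simp
    ring
  have : 0 ≤ (β * l - s) ^ 2 / l := by positivity
  have : 0 ≤ (1 - β ^ 2) * (l - m) := mul_nonneg (by linarith) (by linarith)
  linarith

namespace Matrix

variable {ι : Type*} [Fintype ι] [DecidableEq ι]

lemma dotProduct_conj_diagonal_mulVec (U : Matrix ι ι ℝ) (d v : ι → ℝ) :
    v ⬝ᵥ ((U * diagonal d * Uᵀ) *ᵥ v) = ∑ i, d i * (Uᵀ *ᵥ v) i ^ 2 := by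
  rw [← mulVec_mulVec, ← mulVec_mulVec, dotProduct_mulVec, ← mulVec_transpose, dotProduct]
  exact Finset.sum_congr rfl fun i _ => by rw [mulVec_diagonal]; ring

lemma transpose_mulVec_dotProduct_self {U : Matrix ι ι ℝ} (hU : U * Uᵀ = 1) (v : ι → ℝ) :
    (Uᵀ *ᵥ v) ⬝ᵥ (Uᵀ *ᵥ v) = v ⬝ᵥ v := by
  rw [dotProduct_mulVec, ← mulVec_transpose, transpose_transpose, mulVec_mulVec, hU, one_mulVec]

namespace IsHermitian

variable {A : Matrix ι ι ℝ} (hA : A.IsHermitian)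

local notation "U" => (hA.eigenvectorUnitary : Matrix ι ι ℝ)

lemma eigenvectorUnitary_mul_transpose : U * Uᵀ = 1 := by
  have := Unitary.coe_mul_star_self hA.eigenvectorUnitary
  rwa [Unitary.coe_star, star_eq_conjTranspose, conjTranspose_eq_transpose_of_trivial] at this

lemma smul_one_sub_eq_conj_diagonal (l : ℝ) :
    l • (1 : Matrix ι ι ℝ) - A = U * diagonal (fun i => l - hA.eigenvalues i) * Uᵀ := by
  conv_lhs => rw [hA.spectral_theorem]
  rw [← Algebra.algebraMap_eq_smul_one,
    ← AlgHomClass.commutes (Unitary.conjStarAlgAut ℝ _ hA.eigenvectorUnitary),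
    ← map_sub, Unitary.conjStarAlgAut_apply, algebraMap_eq_diagonal, ← diagonal_sub]
  simp [star_eq_conjTranspose, conjTranspose_eq_transpose_of_trivial]

lemma inv_smul_one_sub_eq_conj_diagonal {l : ℝ} (hl : ∀ i, hA.eigenvalues i ≠ l) :
    (l • (1 : Matrix ι ι ℝ) - A)⁻¹ = U * diagonal (fun i => (l - hA.eigenvalues i)⁻¹) * Uᵀ := by
  have hUt : (Uᵀ)⁻¹ = U := inv_eq_left_inv hA.eigenvectorUnitary_mul_transpose
  have hU : U⁻¹ = Uᵀ := inv_eq_right_inv hA.eigenvectorUnitary_mul_transpose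
  have hD : (diagonal fun i => l - hA.eigenvalues i)⁻¹ =
      diagonal fun i => (l - hA.eigenvalues i)⁻¹ :=
    inv_eq_left_inv <| by
      rw [diagonal_mul_diagonal, ← diagonal_one]
      exact congrArg diagonal <| funext fun i => inv_mul_cancel₀ (sub_ne_zero.2 (hl i).symm)
  rw [hA.smul_one_sub_eq_conj_diagonal, mul_inv_rev, mul_inv_rev, hUt, hU, hD, Matrix.mul_assoc]

lemma dotProduct_inv_smul_one_sub_mulVec {l : ℝ} (hl : ∀ i, hA.eigenvalues i ≠ l) (v : ι → ℝ) :
    v ⬝ᵥ ((l • (1 : Matrix ι ι ℝ) - A)⁻¹ *ᵥ v) =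
      ∑ i, (l - hA.eigenvalues i)⁻¹ * (Uᵀ *ᵥ v) i ^ 2 := by
  rw [hA.inv_smul_one_sub_eq_conj_diagonal hl, dotProduct_conj_diagonal_mulVec]

lemma dotProduct_inv_smul_one_sub_mulVec_le {a l : ℝ} (ha : 0 < a)
    (h : ∀ i, a ≤ l - hA.eigenvalues i) (v : ι → ℝ) :
    v ⬝ᵥ ((l • (1 : Matrix ι ι ℝ) - A)⁻¹ *ᵥ v) ≤ (v ⬝ᵥ v) / a := by
  rw [hA.dotProduct_inv_smul_one_sub_mulVec (fun i => by linarith [h i]),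
    ← transpose_mulVec_dotProduct_self hA.eigenvectorUnitary_mul_transpose v, dotProduct,
    div_eq_inv_mul, Finset.mul_sum]
  refine Finset.sum_le_sum fun i _ => ?_
  rw [← sq]
  gcongr
  exact h i

lemma div_le_dotProduct_inv_smul_one_sub_mulVec {b l : ℝ}
    (h : ∀ i, 0 < l - hA.eigenvalues i ∧ l - hA.eigenvalues i ≤ b) (v : ι → ℝ) :
    (v ⬝ᵥ v) / b ≤ v ⬝ᵥ ((l • (1 : Matrix ι ι ℝ) - A)⁻¹ *ᵥ v) := by
  rw [hA.dotProduct_inv_smul_one_sub_mulVec (fun i => by linarith [(h i).1]),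
    ← transpose_mulVec_dotProduct_self hA.eigenvectorUnitary_mul_transpose v, dotProduct,
    div_eq_inv_mul, Finset.mul_sum]
  refine Finset.sum_le_sum fun i _ => ?_
  rw [← sq]
  gcongr
  exacts [(h i).1, (h i).2]

end IsHermitian
end Matrix

theorem stmt6 {n : ℕ} (Q : Matrix (Fin n) (Fin n) ℝ) (hQ : Q.PosSemidef) (v : Fin n → ℝ)
    (β : ℝ) (hβ : β ∈ Set.Icc (0 : ℝ) 1) :
    (1 - β ^ 2) * (⨆ i, hQ.1.eigenvalues i) + 2 * β * Real.sqrt (v ⬝ᵥ v) ≤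
      (⨅ l : {l : ℝ // (⨆ i, hQ.1.eigenvalues i) < l},
        (l : ℝ) + v ⬝ᵥ (((l : ℝ) • (1 : Matrix (Fin n) (Fin n) ℝ) - Q)⁻¹ *ᵥ v)) ∧
    (⨅ l : {l : ℝ // (⨆ i, hQ.1.eigenvalues i) < l},
        (l : ℝ) + v ⬝ᵥ (((l : ℝ) • (1 : Matrix (Fin n) (Fin n) ℝ) - Q)⁻¹ *ᵥ v)) ≤
      (⨆ i, hQ.1.eigenvalues i) + 2 * Real.sqrt (v ⬝ᵥ v) := by
  set lmax := ⨆ i, hQ.1.eigenvalues i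
  set s := Real.sqrt (v ⬝ᵥ v)
  have hμ_nonneg : ∀ i, 0 ≤ hQ.1.eigenvalues i := hQ.eigenvalues_nonneg
  have hμ_le : ∀ i, hQ.1.eigenvalues i ≤ lmax := le_ciSup (Set.finite_range _).bddAbove
  have hlmax : 0 ≤ lmax := Real.iSup_nonneg hμ_nonneg
  have hs : 0 ≤ s := Real.sqrt_nonneg _
  have hvv : v ⬝ᵥ v = s ^ 2 := (Real.sq_sqrt (by simpa using dotProduct_star_self_nonneg v)).symm
  have hpoint : ∀ l : {l : ℝ // lmax < l}, (1 - β ^ 2) * lmax + 2 * β * s ≤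
      (l : ℝ) + v ⬝ᵥ (((l : ℝ) • (1 : Matrix (Fin n) (Fin n) ℝ) - Q)⁻¹ *ᵥ v) := by
    rintro ⟨l, hl⟩
    have hquad := hQ.1.div_le_dotProduct_inv_smul_one_sub_mulVec
      (fun i => ⟨by linarith [hμ_le i], by linarith [hμ_nonneg i]⟩) v
    rw [hvv] at hquad
    linarith [le_add_sq_div hβ hlmax hl s]
  refine ⟨le_ciInf hpoint, le_of_forall_pos_le_add fun ε hε => ?_⟩
  have hl : lmax < lmax + (s + ε) := by linarith
  have hquad := hQ.1.dotProduct_inv_smul_one_sub_mulVec_le (a := s + ε) (l := lmax + (s + ε))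
    (by positivity) (fun i => by linarith [hμ_le i]) v
  rw [hvv] at hquad
  have hsε : s ^ 2 / (s + ε) ≤ s := div_le_of_le_mul₀ (by positivity) hs (by nlinarith)
  have hinf := ciInf_le ⟨_, Set.forall_mem_range.2 hpoint⟩ (⟨_, hl⟩ : {l : ℝ // lmax < l})
  simp only at hinf
  linarith
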